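/- Let v: ℂ[G(3,n)] → ℂ be an algebra homomorphism with v(Δ^{i,i+1,i+2}) = 1 for all i (indices mod n). With Δ_k(i) := v(Δ at {i, i+1, i+k+2}) and Δ^k(i) := v(Δ at {i, i+k+1, i+k+2}), for 3 ≤ k < n−3 the recursion Δ^k(i) = Δ^1(i+k−1)·Δ^{k−1}(i) − Δ_1(i+k−2)·Δ^{k−2}(i) + Δ^{k−3}(i) holds. -/

import Mathlib

open Finset

/-- `(a,b,c)` is cyclically ordered in `Fin n`. -/
def Cyc {n : ℕ} (a b c : Fin n) : Prop :=
  (a < b ∧ b < c) ∨ (b < c ∧ c < a) ∨ (c < a ∧ a < b)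

/-- `a <_x b` iff `(x,a,b)` is cyclically ordered. -/
def Ltx {n : ℕ} (x a b : Fin n) : Prop := Cyc x a b

/-- `a ≤_x b`. -/
def Leqx {n : ℕ} (x a b : Fin n) : Prop := Ltx x a b ∨ a = b

/-- Two subsets `A`, `B` of `Fin n` are crossing. -/
def Crossing {n : ℕ} (A B : Finset (Fin n)) : Prop :=
  ∃ a ∈ A \ B, ∃ c ∈ A \ B, ∃ b ∈ B \ A, ∃ d ∈ B \ A, Cyc a b c ∧ Cyc b c d

/-- `F` is a maximal weakly separated family of triangles in `Fin n`. -/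
def MaxWS {n : ℕ} (F : Finset (Finset (Fin n))) : Prop :=
  (∀ t ∈ F, t.card = 3) ∧
  (∀ s ∈ F, ∀ t ∈ F, ¬ Crossing s t) ∧
  (∀ t : Finset (Fin n), t.card = 3 →
    (∀ s ∈ F, ¬ Crossing t s ∧ ¬ Crossing s t) → t ∈ F)

/-- The subfamily of triangles of `F` containing `x`. -/
def Fx {n : ℕ} (F : Finset (Finset (Fin n))) (x : Fin n) : Finset (Finset (Fin n)) :=
  F.filter (fun t => x ∈ t)

/-- Degree of `a` in the graph `G(F_x)`: the number of triangles of `F`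
containing both `x` and `a`. -/
def degx {n : ℕ} (F : Finset (Finset (Fin n))) (x a : Fin n) : ℕ :=
  ((Fx F x).filter (fun t => a ∈ t)).card

/-- `a` is a vertex of the graph `G(F_x)`. -/
def IsVertex {n : ℕ} (F : Finset (Finset (Fin n))) (x a : Fin n) : Prop :=
  a ≠ x ∧ 1 ≤ degx F x a

/-- `a` is a triangulation point of `G(F_x)`: a vertex of degree at least 2. -/
def IsTriPoint {n : ℕ} (F : Finset (Finset (Fin n))) (x a : Fin n) : Prop :=
  a ≠ x ∧ 2 ≤ degx F x a

/-- `a` is a leaf of `G(F_x)` attached to `b`. -/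
def IsLeafAt {n : ℕ} (F : Finset (Finset (Fin n))) (x a b : Fin n) : Prop :=
  a ≠ x ∧ degx F x a = 1 ∧ ({x, b, a} : Finset (Fin n)) ∈ F

/-- A graph with vertex set `V ⊆ Fin n` (in the induced cyclic order) and edge
set `E` is a triangulation of a polygon: equivalently (as noted in the paper),
`E` is a maximal family of pairwise non-crossing 2-subsets of `V`. -/
def IsPolygonTriangulation {n : ℕ} (V : Set (Fin n)) (E : Set (Finset (Fin n))) : Prop :=
  (∀ e ∈ E, e.card = 2 ∧ ↑e ⊆ V) ∧
  (∀ e ∈ E, ∀ f ∈ E, ¬ Crossing e f) ∧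
  (∀ e : Finset (Fin n), e.card = 2 → ↑e ⊆ V →
    (∀ f ∈ E, ¬ Crossing e f ∧ ¬ Crossing f e) → e ∈ E)

/-- The Plücker ideal: alternating relations together with the Plücker relations. -/
noncomputable def plueckerIdeal (n : ℕ) : Ideal (MvPolynomial (Fin 3 → Fin n) ℂ) :=
  Ideal.span { p | (∃ (f : Fin 3 → Fin n) (σ : Equiv.Perm (Fin 3)),
      p = MvPolynomial.X (f ∘ σ) - ((Equiv.Perm.sign σ : ℤˣ) : ℤ) • MvPolynomial.X f) ∨
    (∃ (g : Fin 2 → Fin n) (h : Fin 4 → Fin n),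
      p = ∑ l : Fin 4, (-1 : MvPolynomial (Fin 3 → Fin n) ℂ) ^ (l : ℕ) *
        MvPolynomial.X ![g 0, g 1, h l] * MvPolynomial.X (h ∘ l.succAbove)) }

/-- The homogeneous coordinate ring `ℂ[G(3,n)]` of the Grassmannian. -/
abbrev GrassRing (n : ℕ) := MvPolynomial (Fin 3 → Fin n) ℂ ⧸ plueckerIdeal n

/-- The Plücker coordinate `Δ^{ijk}`. -/
noncomputable def Pl {n : ℕ} (i j k : Fin n) : GrassRing n :=
  Ideal.Quotient.mk _ (MvPolynomial.X ![i, j, k])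

/-- Median of three elements of `Fin n`. -/
def mid3 {n : ℕ} (i j k : Fin n) : Fin n := max (min i j) (min (max i j) k)

/-- The Plücker coordinate `Δ^{o(i,j,k)}` with the indices ordered increasingly. -/
noncomputable def Plo {n : ℕ} (i j k : Fin n) : GrassRing n :=
  Pl (min i (min j k)) (mid3 i j k) (max i (max j k))

open Fin.NatCast

/-- `Δ_k(i) = v(Δ at {i, i+1, i+k+2})`. -/
noncomputable def Dlow {n : ℕ} [NeZero n] (v : GrassRing n →ₐ[ℂ] ℂ) (k : ℕ) (i : Fin n) : ℂ :=
  v (Plo i (i + 1) (i + ((k + 2 : ℕ) : Fin n)))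

/-- `Δ^k(i) = v(Δ at {i, i+k+1, i+k+2})`. -/
noncomputable def Dup {n : ℕ} [NeZero n] (v : GrassRing n →ₐ[ℂ] ℂ) (k : ℕ) (i : Fin n) : ℂ :=
  v (Plo i (i + ((k + 1 : ℕ) : Fin n)) (i + ((k + 2 : ℕ) : Fin n)))

/-!
The six points `i, i+k-2, i+k-1, i+k, i+k+1, i+k+2` are cyclically ordered because `k + 2 < n`,
so their Plücker coordinates satisfy the three-term relations. The relation with pivot `i+k+1`
on the crossing chords `(i+k+2, i+k-1)`, `(i, i+k)` gives
`Δ^k(i) = Δ^1(i+k-1) Δ^{k-1}(i) - v(Δ^{o(i,i+k-1,i+k+1)})`, since the consecutive coordinates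
`Δ^{j,j+1,j+2}` are sent to `1`; the relation with pivot `i+k-1` on the chords `(i+k, i)`,
`(i+k+1, i+k-2)` expresses the last term as `Δ_1(i+k-2) Δ^{k-2}(i) - Δ^{k-3}(i)`.
-/

open MvPolynomial

section Plucker

variable {n : ℕ}

theorem Pl_perm (f : Fin 3 → Fin n) (σ : Equiv.Perm (Fin 3)) :
    Pl (f (σ 0)) (f (σ 1)) (f (σ 2)) = (Equiv.Perm.sign σ : ℤ) • Pl (f 0) (f 1) (f 2) := by
  have hf : ∀ g : Fin 3 → Fin n, ![g 0, g 1, g 2] = g := fun g => by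
    ext j; fin_cases j <;> rfl
  rw [Pl, Pl, hf, show ![f (σ 0), f (σ 1), f (σ 2)] = f ∘ σ from hf (f ∘ σ), ← map_zsmul,
    Ideal.Quotient.eq]
  exact Ideal.subset_span (Or.inl ⟨f, σ, rfl⟩)

theorem Pl_rotate (a b c : Fin n) : Pl a b c = Pl b c a := by
  have h := Pl_perm ![a, b, c] (finRotate 3)
  rw [show Equiv.Perm.sign (finRotate 3) = 1 by decide] at h
  simpa using h.symm

theorem Pl_swap_outer (a b c : Fin n) : Pl c b a = -Pl a b c := by
  have h := Pl_perm ![a, b, c] (Equiv.swap 0 2)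
  rw [show Equiv.Perm.sign (Equiv.swap (0 : Fin 3) 2) = -1 by decide] at h
  simpa [Equiv.swap_apply_of_ne_of_ne] using h

theorem Pl_self_outer (z a : Fin n) : Pl z a z = 0 := by
  have h : (2 : ℂ) • Pl z a z = 0 := by
    rw [two_smul]
    nth_rewrite 1 [Pl_swap_outer]
    exact neg_add_cancel _
  exact (smul_eq_zero.mp h).resolve_left two_ne_zero

theorem Pl_three_term (z a b c d : Fin n) :
    Pl z a c * Pl z b d = Pl z a b * Pl z c d + Pl z a d * Pl z b c := by
  -- the Plücker relation for `g = (z, a)`, `h = (z, b, c, d)`; its first term contains `Δ^{zaz} = 0`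
  have h : Ideal.Quotient.mk (plueckerIdeal n) (∑ l : Fin 4, (-1) ^ (l : ℕ) *
      X ![![z, a] 0, ![z, a] 1, ![z, b, c, d] l] * X (![z, b, c, d] ∘ l.succAbove)) = 0 :=
    Ideal.Quotient.eq_zero_iff_mem.mpr (Ideal.subset_span (Or.inr ⟨![z, a], ![z, b, c, d], rfl⟩))
  obtain ⟨h₀, h₁, h₂, h₃⟩ : ![z, b, c, d] ∘ Fin.succ = ![b, c, d] ∧
      ![z, b, c, d] ∘ Fin.succAbove 1 = ![z, c, d] ∧ ![z, b, c, d] ∘ Fin.succAbove 2 = ![z, b, d] ∧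
      ![z, b, c, d] ∘ Fin.succAbove 3 = ![z, b, c] := by
    refine ⟨?_, ?_, ?_, ?_⟩ <;> ext j <;> fin_cases j <;> rfl
  simp only [Fin.sum_univ_four, Fin.succAbove_zero, h₀, h₁, h₂, h₃, Fin.isValue,
    Matrix.cons_val_zero, Matrix.cons_val_one, Matrix.cons_val_fin_one, Matrix.cons_val,
    Fin.coe_ofNat_eq_mod, Nat.reduceMod, Nat.zero_mod, Nat.one_mod, pow_zero, pow_one, one_mul,
    neg_mul, even_two, Even.neg_pow, one_pow, map_add, map_mul, map_neg, map_pow, map_one] at h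
  have hz := Pl_self_outer z a
  unfold Pl at hz ⊢
  linear_combination h - Ideal.Quotient.mk (plueckerIdeal n) (X ![b, c, d]) * hz

end Plucker

section CyclicOrder

variable {n : ℕ} {z a b c d : Fin n}

theorem Cyc.rotate (h : Cyc a b c) : Cyc b c a := by
  unfold Cyc at *
  tauto

theorem Cyc.trans (hab : Cyc z a b) (hbc : Cyc z b c) : Cyc z a c := by
  unfold Cyc at *
  simp only [Fin.lt_def] at *
  omega

theorem cyc_add_natCast [NeZero n] (i : Fin n) {p q r : ℕ} (hpq : p < q) (hqr : q < r)
    (hr : r < n) : Cyc (i + (p : Fin n)) (i + (q : Fin n)) (i + (r : Fin n)) := by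
  unfold Cyc
  simp only [Fin.lt_def, Fin.val_add_eq_ite, Fin.val_natCast, Nat.mod_eq_of_lt hr,
    Nat.mod_eq_of_lt (hqr.trans hr), Nat.mod_eq_of_lt (hpq.trans (hqr.trans hr))]
  have := i.isLt
  split_ifs <;> omega

end CyclicOrder

section OrderedPlucker

variable {n : ℕ}

theorem Plo_swap_left (a b c : Fin n) : Plo a b c = Plo b a c := by
  unfold Plo mid3
  congr 1 <;> ext <;> simp only [Fin.coe_max, Fin.coe_min] <;> omega

theorem Plo_swap_right (a b c : Fin n) : Plo a b c = Plo a c b := by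
  unfold Plo mid3
  congr 1 <;> ext <;> simp only [Fin.coe_max, Fin.coe_min] <;> omega

variable {z a b c d : Fin n}

theorem Plo_of_lt (hab : a < b) (hbc : b < c) : Plo a b c = Pl a b c := by
  simp only [Plo, mid3, min_eq_left, max_eq_right, hab.le, hbc.le, (hab.trans hbc).le]

theorem Plo_eq_Pl_of_cyc (h : Cyc a b c) : Plo a b c = Pl a b c := by
  rcases h with ⟨hab, hbc⟩ | ⟨hbc, hca⟩ | ⟨hca, hab⟩
  · exact Plo_of_lt hab hbc
  · rw [Plo_swap_left, Plo_swap_right, Plo_of_lt hbc hca, Pl_rotate a]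
  · rw [Plo_swap_right, Plo_swap_left, Plo_of_lt hca hab, Pl_rotate c]

theorem Plo_three_term (hab : Cyc z a b) (hbc : Cyc z b c) (hcd : Cyc z c d) :
    Plo z a c * Plo z b d = Plo z a b * Plo z c d + Plo z a d * Plo z b c := by
  have hac := hab.trans hbc
  rw [Plo_eq_Pl_of_cyc hab, Plo_eq_Pl_of_cyc hbc, Plo_eq_Pl_of_cyc hcd, Plo_eq_Pl_of_cyc hac,
    Plo_eq_Pl_of_cyc (hbc.trans hcd), Plo_eq_Pl_of_cyc (hac.trans hcd)]
  exact Pl_three_term z a b c d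

end OrderedPlucker

section Valuation

variable {n : ℕ} [NeZero n] (v : GrassRing n →ₐ[ℂ] ℂ)

theorem Dup_add_natCast (k p : ℕ) (j : Fin n) :
    Dup v k (j + p) = v (Plo (j + p) (j + ↑(p + k + 1)) (j + ↑(p + k + 2))) := by
  simp only [Dup, add_assoc, Nat.cast_add]

theorem Dlow_add_natCast (k p : ℕ) (j : Fin n) :
    Dlow v k (j + p) = v (Plo (j + p) (j + ↑(p + 1)) (j + ↑(p + k + 2))) := by
  simp only [Dlow, add_assoc, Nat.cast_add, Nat.cast_one]

theorem map_Plo_add_natCast_consecutive (h1 : ∀ i : Fin n, v (Plo i (i + 1) (i + 2)) = 1)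
    (p : ℕ) (j : Fin n) : v (Plo (j + p) (j + ↑(p + 1)) (j + ↑(p + 2))) = 1 := by
  simpa only [add_assoc, Nat.cast_add, Nat.cast_one, Nat.cast_ofNat] using h1 (j + p)

end Valuation

/-- Recursion for the `Δ^k(i)`. -/
theorem up_recursion {n : ℕ} [NeZero n] (v : GrassRing n →ₐ[ℂ] ℂ)
    (h1 : ∀ i : Fin n, v (Plo i (i + 1) (i + 2)) = 1)
    (k : ℕ) (hk : 3 ≤ k) (hk' : k < n - 3) (i : Fin n) :
    Dup v k i = Dup v 1 (i + ((k - 1 : ℕ) : Fin n)) * Dup v (k - 1) i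
      - Dlow v 1 (i + ((k - 2 : ℕ) : Fin n)) * Dup v (k - 2) i
      + Dup v (k - 3) i := by
  obtain ⟨m, rfl⟩ : ∃ m, k = m + 3 := ⟨k - 3, by omega⟩
  have cyc (p q r : ℕ) (h : p < q ∧ q < r ∧ r ≤ m + 5) :
      Cyc (i + (p : Fin n)) (i + (q : Fin n)) (i + (r : Fin n)) :=
    cyc_add_natCast i h.1 h.2.1 (by omega)
  have E1 := congrArg v <| Plo_three_term (cyc 0 (m + 4) (m + 5) (by omega)).rotate
    (cyc 0 (m + 2) (m + 4) (by omega)).rotate.rotate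
    (cyc (m + 2) (m + 3) (m + 4) (by omega)).rotate.rotate
  have E2 := congrArg v <| Plo_three_term (cyc (m + 2) (m + 3) (m + 4) (by omega))
    (cyc 0 (m + 2) (m + 4) (by omega)).rotate
    (cyc 0 (m + 1) (m + 2) (by omega)).rotate.rotate
  have u1 := map_Plo_add_natCast_consecutive v h1 (m + 1) i
  have u2 := map_Plo_add_natCast_consecutive v h1 (m + 2) i
  have u3 := map_Plo_add_natCast_consecutive v h1 (m + 3) i
  rw [show m + 3 - 1 = m + 2 by omega, show m + 3 - 2 = m + 1 by omega, Nat.add_sub_cancel,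
    Dup_add_natCast, Dlow_add_natCast]
  simp only [Dup, map_mul, map_add, add_assoc, Nat.reduceAdd, Nat.cast_zero, add_zero]
    at E1 E2 u1 u2 u3 ⊢
  -- ordered rewriting with the two transpositions sorts the arguments of every `Plo`
  simp only [Plo_swap_left, Plo_swap_right, u1, u2, u3, mul_one, one_mul] at E1 E2
  linear_combination E2 - E1
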